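/- arXiv:2209.01759 — 3 statements merged into one kernel-verified Lean document; each statement's English description precedes it below -/
import Mathlib

section
/- Let n ≥ 1, A ∈ ℝ^{n×n} invertible, Y = Yᵀ > 0 with AY + YAᵀ ≤ 0, B ∈ ℝⁿ, C ∈ ℝ^{1×n} with B + AYCᵀ = 0, and suppose 1/k_h > CYCᵀ with k_h > 0. Define W(x, x_h) = ½xᵀY⁻¹x + x_h²/(2k_h) − (Cx)·x_h. Then W is positive definite on ℝⁿ × ℝ, i.e., W(x, x_h) > 0 for all (x, x_h) ≠ (0, 0), and W(0,0) = 0. -/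
/-! `2 W` is the quadratic form of the block matrix `[[Y⁻¹, -Cᵀ], [-C, 1/k_h]]`, whose Schur
complement is `1/k_h - C Y Cᵀ > 0`. Concretely, completing the square with `z = x - x_h • Y Cᵀ`
gives `2 W(x, x_h) = zᵀ Y⁻¹ z + x_h² (1/k_h - C Y Cᵀ)`: the first term is nonnegative, the second
is positive when `x_h ≠ 0`, and when `x_h = 0` the first is `xᵀ Y⁻¹ x > 0`. -/

open Matrix

theorem Matrix.IsSymm.dotProduct_inv_mulVec_sub_smul_mulVec {ι R : Type*} [Fintype ι]
    [DecidableEq ι] [CommRing R] {Y : Matrix ι ι R} (hY : Y.IsSymm) (hYu : IsUnit Y)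
    (c x : ι → R) (t : R) :
    (x - t • Y *ᵥ c) ⬝ᵥ Y⁻¹ *ᵥ (x - t • Y *ᵥ c) =
      x ⬝ᵥ Y⁻¹ *ᵥ x - 2 * t * (c ⬝ᵥ x) + t ^ 2 * (c ⬝ᵥ Y *ᵥ c) := by
  have hinv : Y⁻¹ *ᵥ Y *ᵥ c = c := by
    rw [mulVec_mulVec, nonsing_inv_mul _ ((isUnit_iff_isUnit_det Y).mp hYu), one_mulVec]
  have hswap : (Y *ᵥ c) ⬝ᵥ Y⁻¹ *ᵥ x = c ⬝ᵥ x := by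
    rw [dotProduct_mulVec, ← mulVec_transpose, hY.inv.eq, hinv]
  simp only [mulVec_sub, mulVec_smul, hinv, dotProduct_sub, sub_dotProduct, smul_dotProduct,
    dotProduct_smul, hswap, smul_eq_mul]
  rw [dotProduct_comm x c, dotProduct_comm (Y *ᵥ c) c]
  ring

theorem Matrix.PosDef.schurComplement_quadForm_pos {ι : Type*} [Fintype ι] [DecidableEq ι]
    {Y : Matrix ι ι ℝ} (hY : Y.PosDef) {c : ι → ℝ} {k : ℝ} (hdc : c ⬝ᵥ Y *ᵥ c < 1 / k)
    {x : ι → ℝ} {t : ℝ} (hne : (x, t) ≠ 0) :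
    0 < 1 / 2 * (x ⬝ᵥ Y⁻¹ *ᵥ x) + t ^ 2 / (2 * k) - (c ⬝ᵥ x) * t := by
  have hsquare := (isHermitian_iff_isSymm.mp hY.isHermitian).dotProduct_inv_mulVec_sub_smul_mulVec
    hY.isUnit c x t
  have hdouble : 2 * (1 / 2 * (x ⬝ᵥ Y⁻¹ *ᵥ x) + t ^ 2 / (2 * k) - (c ⬝ᵥ x) * t) =
      (x - t • Y *ᵥ c) ⬝ᵥ Y⁻¹ *ᵥ (x - t • Y *ᵥ c) + t ^ 2 * (1 / k - c ⬝ᵥ Y *ᵥ c) := by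
    rw [hsquare]; ring
  suffices 0 < (x - t • Y *ᵥ c) ⬝ᵥ Y⁻¹ *ᵥ (x - t • Y *ᵥ c) + t ^ 2 * (1 / k - c ⬝ᵥ Y *ᵥ c) by
    linarith
  by_cases ht : t = 0
  · have hx : x ≠ 0 := fun hx => hne (by simp [hx, ht])
    simpa [ht] using hY.inv.dotProduct_mulVec_pos hx
  · have hz := hY.inv.posSemidef.dotProduct_mulVec_nonneg (x - t • Y *ᵥ c)
    rw [star_trivial] at hz
    have hgap : 0 < t ^ 2 * (1 / k - c ⬝ᵥ Y *ᵥ c) :=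
      mul_pos (by positivity) (sub_pos.mpr hdc)
    linarith

theorem stmt_11_general (n : ℕ) (Y : Matrix (Fin n) (Fin n) ℝ)
    (C : Matrix (Fin 1) (Fin n) ℝ) (k_h : ℝ)
    (hY : Y.PosDef)
    (hdc : 1 / k_h > (C * Y * Cᵀ) 0 0) :
    (∀ (x : Fin n → ℝ) (x_h : ℝ), (x, x_h) ≠ (0, 0) →
        (1 / 2) * (x ⬝ᵥ Y⁻¹.mulVec x) + x_h ^ 2 / (2 * k_h) - (C.mulVec x 0) * x_h > 0) ∧
      (1 / 2) * ((0 : Fin n → ℝ) ⬝ᵥ Y⁻¹.mulVec 0) + (0 : ℝ) ^ 2 / (2 * k_h)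
        - (C.mulVec 0 0) * 0 = 0 := by
  refine ⟨fun x x_h hne => ?_, by simp⟩
  have hCYC : (C * Y * Cᵀ) 0 0 = C 0 ⬝ᵥ Y *ᵥ C 0 := by
    rw [mul_apply', dotProduct_mulVec]; rfl
  rw [hCYC] at hdc
  exact hY.schurComplement_quadForm_pos hdc hne

theorem stmt_11 (n : ℕ) (hn : 1 ≤ n) (A Y : Matrix (Fin n) (Fin n) ℝ)
    (B : Matrix (Fin n) (Fin 1) ℝ) (C : Matrix (Fin 1) (Fin n) ℝ) (k_h : ℝ)
    (hA : IsUnit A) (hY : Y.PosDef) (hYsym : Y.IsSymm)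
    (hlyap : (-(A * Y + Y * Aᵀ)).PosSemidef)
    (hBC : B + A * Y * Cᵀ = 0) (hk : k_h > 0)
    (hdc : 1 / k_h > (C * Y * Cᵀ) 0 0) :
    (∀ (x : Fin n → ℝ) (x_h : ℝ), (x, x_h) ≠ (0, 0) →
        (1 / 2) * (x ⬝ᵥ Y⁻¹.mulVec x) + x_h ^ 2 / (2 * k_h) - (C.mulVec x 0) * x_h > 0) ∧
      (1 / 2) * ((0 : Fin n → ℝ) ⬝ᵥ Y⁻¹.mulVec 0) + (0 : ℝ) ^ 2 / (2 * k_h)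
        - (C.mulVec 0 0) * 0 = 0 :=
  stmt_11_general n Y C k_h hY hdc
end

section
/- Let A ∈ ℝ^{n×n} be invertible, Y = Yᵀ > 0, B ∈ ℝⁿ, C ∈ ℝ^{1×n} with B + AYCᵀ = 0. Then for any x ∈ ℝⁿ and u ∈ ℝ, with ẋ := Ax + Bu, one has (xᵀY⁻¹ − u·C)·ẋ = ½ ẋᵀ(A⁻ᵀY⁻¹ + Y⁻¹A⁻¹)ẋ. -/
/-!
Solving `B + AYCᵀ = 0` for `C` gives `C = -BᵀA⁻ᵀY⁻¹`, so `xᵀY⁻¹ - uC = ẋᵀA⁻ᵀY⁻¹` with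
`ẋ = Ax + uB`. The left side is therefore the scalar `ẋᵀPẋ` with `P = A⁻ᵀY⁻¹`, and a scalar equals
its transpose `ẋᵀPᵀẋ`, where `Pᵀ = Y⁻¹A⁻¹` by symmetry of `Y`.
-/

open Matrix

namespace Matrix

variable {R : Type*} [CommRing R] {n p : Type*} [Fintype n]

theorem transpose_mul_transpose_mul_eq_of_unique {ι : Type*} [Unique ι] (P : Matrix n n R)
    (v : Matrix n ι R) : vᵀ * Pᵀ * v = vᵀ * P * v := by
  have hscalar : (vᵀ * P * v)ᵀ = vᵀ * P * v := by
    ext i j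
    rw [Subsingleton.elim i j, transpose_apply]
  rwa [transpose_mul, transpose_mul, transpose_transpose, ← Matrix.mul_assoc] at hscalar

theorem transpose_eq_neg_of_add_mul_mul_transpose_eq_zero [DecidableEq n] {A Y : Matrix n n R}
    {B : Matrix n p R} {C : Matrix p n R} (hA : IsUnit A.det) (hY : IsUnit Y.det)
    (h : B + A * Y * Cᵀ = 0) : Cᵀ = -(Y⁻¹ * A⁻¹ * B) := by
  calc Cᵀ = Y⁻¹ * (A⁻¹ * (A * Y * Cᵀ)) := by
        rw [Matrix.mul_assoc A, nonsing_inv_mul_cancel_left _ _ hA,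
          nonsing_inv_mul_cancel_left _ _ hY]
    _ = -(Y⁻¹ * A⁻¹ * B) := by
        rw [eq_neg_of_add_eq_zero_right h, Matrix.mul_neg, Matrix.mul_neg, Matrix.mul_assoc]

theorem transpose_mul_inv_transpose_mul_inv_eq_sub_smul [DecidableEq n] {A Y : Matrix n n R}
    {B x : Matrix n p R} {C : Matrix p n R} (hA : IsUnit A.det) (hY : Y.IsSymm)
    (hC : Cᵀ = -(Y⁻¹ * A⁻¹ * B)) (u : R) : (A * x + u • B)ᵀ * ((A⁻¹)ᵀ * Y⁻¹) = xᵀ * Y⁻¹ - u • C := by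
  have hC' : C = -(Bᵀ * ((A⁻¹)ᵀ * Y⁻¹)) := by
    rw [← transpose_transpose C, hC, transpose_neg, transpose_mul, transpose_mul,
      hY.inv.eq]
  have hAA : Aᵀ * (A⁻¹)ᵀ = 1 := by
    rw [← transpose_mul, nonsing_inv_mul _ hA, transpose_one]
  rw [hC', transpose_add, transpose_mul, transpose_smul, Matrix.add_mul, Matrix.mul_assoc,
    ← Matrix.mul_assoc Aᵀ, hAA, Matrix.one_mul, Matrix.smul_mul, smul_neg, sub_neg_eq_add]

end Matrix

theorem stmt_12_general (n : ℕ) (A Y : Matrix (Fin n) (Fin n) ℝ)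
    (B : Matrix (Fin n) (Fin 1) ℝ) (C : Matrix (Fin 1) (Fin n) ℝ)
    (hA : IsUnit A) (hY : Y.PosDef)
    (hBC : B + A * Y * Cᵀ = 0)
    (x : Matrix (Fin n) (Fin 1) ℝ) (u : ℝ) :
    (xᵀ * Y⁻¹ - u • C) * (A * x + u • B) =
      (1 / 2 : ℝ) • ((A * x + u • B)ᵀ * ((A⁻¹)ᵀ * Y⁻¹ + Y⁻¹ * A⁻¹) * (A * x + u • B)) := by
  have hAdet := (isUnit_iff_isUnit_det A).mp hA
  have hYsymm : Y.IsSymm := isHermitian_iff_isSymm.mp hY.isHermitian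
  have hC := transpose_eq_neg_of_add_mul_mul_transpose_eq_zero hAdet
    ((isUnit_iff_isUnit_det Y).mp hY.isUnit) hBC
  have hP : ((A⁻¹)ᵀ * Y⁻¹)ᵀ = Y⁻¹ * A⁻¹ := by
    rw [transpose_mul, transpose_transpose, hYsymm.inv.eq]
  rw [← transpose_mul_inv_transpose_mul_inv_eq_sub_smul hAdet hYsymm hC]
  set v := A * x + u • B
  rw [Matrix.mul_add vᵀ, Matrix.add_mul, ← hP, transpose_mul_transpose_mul_eq_of_unique,
    ← two_smul ℝ, smul_smul]
  norm_num

theorem stmt_12 (n : ℕ) (A Y : Matrix (Fin n) (Fin n) ℝ)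
    (B : Matrix (Fin n) (Fin 1) ℝ) (C : Matrix (Fin 1) (Fin n) ℝ)
    (hA : IsUnit A) (hY : Y.PosDef) (hYsym : Y.IsSymm)
    (hBC : B + A * Y * Cᵀ = 0)
    (x : Matrix (Fin n) (Fin 1) ℝ) (u : ℝ) :
    (xᵀ * Y⁻¹ - u • C) * (A * x + u • B) =
      (1 / 2 : ℝ) • ((A * x + u • B)ᵀ * ((A⁻¹)ᵀ * Y⁻¹ + Y⁻¹ * A⁻¹) * (A * x + u • B)) :=
  stmt_12_general n A Y B C hA hY hBC x u
end

section
/- Let k_h > 0 and let V(x_h) = x_h²/(2k_h). Then V is positive definite on ℝ: V(0) = 0 and V(x_h) > 0 for x_h ≠ 0; and for all e, x_h ∈ ℝ with e·x_h ≥ x_h²/k_h, one has V'(x_h)·(ω_h·e) ≤ ω_h·e² for every ω_h ≥ 0, where V'(x_h) = x_h/k_h; this establishes that the HIGS in integrator mode satisfies the dissipation inequality V̇ ≤ u̇·e of a nonlinear negative imaginary system. -/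
/-! Writing `u = x_h / k_h`, the sector condition becomes `u² ≤ e u`, and then
`e² - u e = (e - u)² + (e u - u²) ≥ 0`; multiplying by `ω_h ≥ 0` gives the dissipation
inequality. -/

section

variable {K : Type*} [Field K] [LinearOrder K] [IsStrictOrderedRing K]

theorem mul_le_sq_of_sq_le_mul {u e : K} (h : u ^ 2 ≤ e * u) : u * e ≤ e ^ 2 := by
  nlinarith [sq_nonneg (e - u)]

theorem sq_div_le_mul_div_of_sq_div_le_mul {k e x : K} (hk : 0 < k) (h : x ^ 2 / k ≤ e * x) :
    (x / k) ^ 2 ≤ e * (x / k) :=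
  calc (x / k) ^ 2 = x ^ 2 / k / k := by ring
    _ ≤ e * x / k := div_le_div_of_nonneg_right h hk.le
    _ = e * (x / k) := mul_div_assoc e x k

end

theorem stmt_14 (k_h : ℝ) (hk : k_h > 0) :
    ((fun x_h : ℝ => x_h ^ 2 / (2 * k_h)) 0 = 0 ∧
      ∀ x_h : ℝ, x_h ≠ 0 → (fun x_h : ℝ => x_h ^ 2 / (2 * k_h)) x_h > 0) ∧
    ∀ ω_h : ℝ, ω_h ≥ 0 → ∀ e x_h : ℝ, e * x_h ≥ x_h ^ 2 / k_h →
      (x_h / k_h) * (ω_h * e) ≤ ω_h * e ^ 2 := by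
  refine ⟨⟨by simp, fun x_h hx => by positivity⟩, fun ω_h hω e x_h hsector => ?_⟩
  have hu := mul_le_sq_of_sq_le_mul (sq_div_le_mul_div_of_sq_div_le_mul hk hsector)
  calc (x_h / k_h) * (ω_h * e) = ω_h * ((x_h / k_h) * e) := by ring
    _ ≤ ω_h * e ^ 2 := mul_le_mul_of_nonneg_left hu hω
end
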